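/- arXiv:1909.07180 — 2 statements merged into one kernel-verified Lean document; each statement's English description precedes it below -/
import Mathlib

section
/- Let H = ΓT + U on ℓ²(Q_N) with U diagonal and T the negative hypercube adjacency operator. Then the pressure p_N(β,Γ) = N^{-1} ln(2^{-N} Tr e^{-βH}) satisfies p_N(β,Γ) ≥ ln cosh(βΓ) - (β/(N2^N)) ∑_{σ∈Q_N} U(σ). -/
/-!
Peierls' inequality `exp ⟨v, A v⟩ ≤ ⟨v, exp A v⟩` for a unit vector `v` is Jensen's inequality for
the spectral measure of `A` in the state `v`; summed over an orthonormal basis it bounds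
`Tr exp A` from below. For `A = -βH` we take the Walsh–Hadamard basis of characters of
`(ℤ/2)^N`: it diagonalises `T`, with the magnetisations `∑ⱼ ±1` as eigenvalues, and every basis
vector sees the diagonal `U` through its uniform average `2^{-N} ∑ U`. The resulting sum then
factorises over the spins into `(2 cosh βΓ)^N`. This is the Gibbs variational principle for the
trial state `e^{-βΓT} / Tr e^{-βΓT}`, whose diagonal is uniform.
-/

/-- The negative adjacency operator `T` of the Hamming cube `Q_N`. -/
def Tmat (N : ℕ) : Matrix (Fin N → Bool) (Fin N → Bool) ℝ :=
  fun σ σ' => if hammingDist σ σ' = 1 then -1 else 0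

namespace Matrix

variable {n : Type*} [Fintype n] [DecidableEq n] {𝕜 : Type*} [RCLike 𝕜]

theorem mul_diagonal_mul_star_apply_self (u : Matrix n n 𝕜) (d : n → ℝ) (i : n) :
    (u * diagonal (RCLike.ofReal ∘ d : n → 𝕜) * star u) i i =
      ((∑ k, ‖u i k‖ ^ 2 * d k : ℝ) : 𝕜) := by
  rw [mul_apply]
  push_cast
  refine Finset.sum_congr rfl fun k _ => ?_
  rw [mul_diagonal, star_apply, RCLike.star_def, mul_right_comm, RCLike.mul_conj]
  rfl

theorem sum_norm_sq_apply_of_mem_unitaryGroup {u : Matrix n n 𝕜} (hu : u ∈ unitaryGroup n 𝕜)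
    (i : n) : ∑ k, ‖u i k‖ ^ 2 = 1 := by
  have := congrFun (congrFun (mem_unitaryGroup_iff.mp hu) i) i
  rw [mul_apply, one_apply_eq] at this
  simp only [star_apply, RCLike.star_def, RCLike.mul_conj] at this
  exact_mod_cast this

namespace IsHermitian

theorem apply_self_eq {A : Matrix n n 𝕜} (hA : A.IsHermitian) (i : n) : A i i =
    ((∑ k, ‖(hA.eigenvectorUnitary : Matrix n n 𝕜) i k‖ ^ 2 * hA.eigenvalues k : ℝ) : 𝕜) := by
  conv_lhs => rw [hA.spectral_theorem]
  exact mul_diagonal_mul_star_apply_self _ _ i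

theorem cfc_apply_self {A : Matrix n n 𝕜} (hA : A.IsHermitian) (f : ℝ → ℝ) (i : n) :
    hA.cfc f i i =
      ((∑ k, ‖(hA.eigenvectorUnitary : Matrix n n 𝕜) i k‖ ^ 2 * f (hA.eigenvalues k) : ℝ) : 𝕜) :=
  mul_diagonal_mul_star_apply_self _ _ i

theorem le_re_cfc_apply_self {A : Matrix n n 𝕜} (hA : A.IsHermitian) {f : ℝ → ℝ}
    (hf : ConvexOn ℝ Set.univ f) (i : n) :
    f (RCLike.re (A i i)) ≤ RCLike.re (hA.cfc f i i) := by
  rw [hA.apply_self_eq, hA.cfc_apply_self, RCLike.ofReal_re, RCLike.ofReal_re]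
  simpa only [smul_eq_mul] using hf.map_sum_le (fun k _ => sq_nonneg _)
    (sum_norm_sq_apply_of_mem_unitaryGroup hA.eigenvectorUnitary.2 i) fun _ _ => Set.mem_univ _

theorem exp_apply_self_le {A : Matrix n n ℝ} (hA : A.IsHermitian) (i : n) :
    Real.exp (A i i) ≤ NormedSpace.exp A i i := by
  open scoped Matrix.Norms.L2Operator in
  rw [← CFC.real_exp_eq_normedSpace_exp hA.isSelfAdjoint, hA.cfc_eq]
  exact hA.le_re_cfc_apply_self convexOn_exp i

theorem sum_exp_conj_apply_self_le_trace_exp {A : Matrix n n ℝ} (hA : A.IsHermitian)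
    (u : unitaryGroup n ℝ) :
    ∑ i, Real.exp ((u * A * star u : Matrix n n ℝ) i i) ≤ (NormedSpace.exp A).trace := by
  have hB : (u * A * star u : Matrix n n ℝ).IsHermitian :=
    isHermitian_mul_mul_conjTranspose _ hA
  calc ∑ i, Real.exp ((u * A * star u : Matrix n n ℝ) i i)
      ≤ ∑ i, NormedSpace.exp (u * A * star u : Matrix n n ℝ) i i :=
        Finset.sum_le_sum fun i _ => hB.exp_apply_self_le i
    _ = (NormedSpace.exp A).trace := by
        have hexp := exp_units_conj (Unitary.toUnits u) A
        have htr := trace_units_conj (Unitary.toUnits u) (NormedSpace.exp A)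
        simp only [Unitary.val_toUnits_apply, Unitary.val_inv_toUnits_apply] at hexp htr
        rw [Unitary.star_eq_inv, hexp, ← htr]
        rfl

end IsHermitian

end Matrix

open Finset Matrix

section Hypercube

variable {ι : Type*} [DecidableEq ι]

def flipAt (j : ι) (σ : ι → Bool) : ι → Bool := Function.update σ j (!σ j)

theorem flipAt_left_injective (σ : ι → Bool) : Function.Injective fun j => flipAt j σ := by
  intro j j' h
  by_contra hne
  have := congrFun h j
  simp [flipAt, Function.update_of_ne hne] at this

variable [Fintype ι]

theorem hammingDist_eq_one_iff {σ σ' : ι → Bool} :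
    hammingDist σ σ' = 1 ↔ ∃ j, σ' = flipAt j σ := by
  rw [hammingDist, card_eq_one]
  refine exists_congr fun j => ?_
  rw [Finset.ext_iff, funext_iff]
  refine forall_congr' fun i => ?_
  by_cases hi : i = j
  · subst hi
    cases h : σ i <;> cases h' : σ' i <;> simp [flipAt, h, h']
  · simp [flipAt, hi, eq_comm]

theorem sum_hammingDist_eq_one {M : Type*} [AddCommMonoid M] (σ : ι → Bool)
    (g : (ι → Bool) → M) : ∑ σ' with hammingDist σ σ' = 1, g σ' = ∑ j, g (flipAt j σ) := by
  have : ({σ' | hammingDist σ σ' = 1} : Finset (ι → Bool)) = univ.image fun j => flipAt j σ := by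
    ext σ'
    rw [mem_filter, hammingDist_eq_one_iff, mem_image]
    simp [eq_comm]
  rw [this, sum_image fun j _ j' _ h => flipAt_left_injective σ h]

end Hypercube

section Walsh

variable {ι : Type*} [Fintype ι]

def spin (b : Bool) : ℝ := if b then 1 else -1

def magnetization (τ : ι → Bool) : ℝ := ∑ j, spin (τ j)

def walsh (σ τ : ι → Bool) : ℝ := ∏ j, if σ j && τ j then -1 else 1

theorem walsh_comm (σ τ : ι → Bool) : walsh σ τ = walsh τ σ := by
  simp only [walsh, Bool.and_comm]

theorem walsh_mul_self (σ τ : ι → Bool) : walsh σ τ * walsh σ τ = 1 := by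
  rw [walsh, ← prod_mul_distrib]
  exact prod_eq_one fun j _ => by split_ifs <;> norm_num

variable [DecidableEq ι]

theorem walsh_flipAt (j : ι) (σ τ : ι → Bool) :
    walsh (flipAt j σ) τ = -spin (τ j) * walsh σ τ := by
  rw [walsh, walsh, ← mul_prod_erase _ _ (mem_univ j), ← mul_prod_erase _ _ (mem_univ j),
    ← mul_assoc]
  congr 1
  · cases h : σ j <;> cases τ j <;> simp [flipAt, spin, h]
  · exact prod_congr rfl fun i hi => by rw [flipAt, Function.update_of_ne (ne_of_mem_erase hi)]

theorem sum_walsh_mul_walsh (σ σ' : ι → Bool) :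
    ∑ τ, walsh σ τ * walsh τ σ' = if σ = σ' then 2 ^ Fintype.card ι else 0 := by
  have hcoord (j : ι) : ∑ b : Bool, (if σ j && b then (-1 : ℝ) else 1) *
      (if b && σ' j then -1 else 1) = if σ j = σ' j then 2 else 0 := by
    cases σ j <;> cases σ' j <;> norm_num
  simp_rw [walsh, ← prod_mul_distrib]
  rw [← Fintype.prod_sum fun j b => (if σ j && b then (-1 : ℝ) else 1) *
    (if b && σ' j then -1 else 1), Fintype.prod_congr _ _ hcoord, Fintype.prod_ite_zero]
  simp [funext_iff]

theorem sum_exp_mul_magnetization (t : ℝ) :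
    ∑ τ : ι → Bool, Real.exp (t * magnetization τ) = (2 * Real.cosh t) ^ Fintype.card ι := by
  have hcoord : ∑ b : Bool, Real.exp (t * spin b) = 2 * Real.cosh t := by
    rw [Fintype.sum_bool, Real.cosh_eq, spin, spin, if_pos rfl, if_neg Bool.false_ne_true, mul_one,
      mul_neg_one]
    ring
  simp_rw [magnetization, mul_sum, Real.exp_sum]
  rw [← Fintype.prod_sum fun (_ : ι) b => Real.exp (t * spin b),
    Fintype.prod_congr _ _ fun _ => hcoord, prod_const, card_univ]

end Walsh

theorem inv_sqrt_two_pow_sq (n : ℕ) : ((√2)⁻¹ ^ n) ^ 2 = (2 : ℝ)⁻¹ ^ n := by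
  rw [← pow_mul, mul_comm, pow_mul, inv_pow, Real.sq_sqrt zero_le_two]

section Hadamard

variable (ι : Type*) [Fintype ι]

noncomputable def walshHadamard : Matrix (ι → Bool) (ι → Bool) ℝ :=
  of fun σ τ => (√2)⁻¹ ^ Fintype.card ι * walsh σ τ

theorem walshHadamard_apply_comm (σ τ : ι → Bool) :
    walshHadamard ι σ τ = walshHadamard ι τ σ := by
  rw [walshHadamard, of_apply, of_apply, walsh_comm]

theorem walshHadamard_transpose : (walshHadamard ι)ᵀ = walshHadamard ι := by
  ext σ τ
  exact walshHadamard_apply_comm ι τ σ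

theorem star_walshHadamard : star (walshHadamard ι) = walshHadamard ι := by
  rw [star_eq_conjTranspose, conjTranspose_eq_transpose_of_trivial, walshHadamard_transpose]

theorem walshHadamard_apply_mul_self (σ τ : ι → Bool) :
    walshHadamard ι σ τ * walshHadamard ι σ τ = 2⁻¹ ^ Fintype.card ι := by
  rw [walshHadamard, of_apply, mul_mul_mul_comm, walsh_mul_self, mul_one, ← sq,
    inv_sqrt_two_pow_sq]

variable [DecidableEq ι]

theorem walshHadamard_mul_self : walshHadamard ι * walshHadamard ι = 1 := by
  ext σ σ'
  simp only [mul_apply, walshHadamard, of_apply]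
  simp_rw [mul_mul_mul_comm _ (walsh _ _), ← mul_sum, sum_walsh_mul_walsh, one_apply, ← sq,
    inv_sqrt_two_pow_sq]
  split_ifs
  · rw [← mul_pow, inv_mul_cancel₀ two_ne_zero, one_pow]
  · rw [mul_zero]

theorem walshHadamard_mul_diagonal_mul_walshHadamard_apply_self (U : (ι → Bool) → ℝ)
    (τ : ι → Bool) :
    (walshHadamard ι * diagonal U * walshHadamard ι) τ τ = 2⁻¹ ^ Fintype.card ι * ∑ σ, U σ := by
  rw [mul_apply, mul_sum]
  refine sum_congr rfl fun σ _ => ?_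
  rw [mul_diagonal, walshHadamard_apply_comm ι σ τ, mul_right_comm, walshHadamard_apply_mul_self,
    mul_comm]

theorem walshHadamard_mem_unitaryGroup : walshHadamard ι ∈ unitaryGroup (ι → Bool) ℝ := by
  rw [mem_unitaryGroup_iff, star_walshHadamard, walshHadamard_mul_self]

end Hadamard

theorem Tmat_isHermitian (N : ℕ) : (Tmat N).IsHermitian := by
  ext σ τ
  simp only [conjTranspose_apply, Tmat, star_trivial, hammingDist_comm]

theorem Tmat_mul_walshHadamard (N : ℕ) :
    Tmat N * walshHadamard (Fin N) =
      walshHadamard (Fin N) * diagonal magnetization := by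
  ext σ τ
  have hflip (j : Fin N) : walshHadamard (Fin N) (flipAt j σ) τ =
      -spin (τ j) * walshHadamard (Fin N) σ τ := by
    simp only [walshHadamard, of_apply, walsh_flipAt]; ring
  calc (Tmat N * walshHadamard (Fin N)) σ τ
      = -∑ σ' with hammingDist σ σ' = 1, walshHadamard (Fin N) σ' τ := by
        rw [mul_apply, sum_filter, ← sum_neg_distrib]
        exact sum_congr rfl fun σ' _ => by rw [Tmat]; split_ifs <;> ring
    _ = magnetization τ * walshHadamard (Fin N) σ τ := by
        simp_rw [sum_hammingDist_eq_one, hflip, neg_mul, sum_neg_distrib, neg_neg, ← sum_mul]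
        rfl
    _ = _ := by rw [mul_diagonal, mul_comm]

theorem walshHadamard_mul_Tmat_mul_walshHadamard (N : ℕ) :
    walshHadamard (Fin N) * Tmat N * walshHadamard (Fin N) =
      diagonal magnetization := by
  rw [Matrix.mul_assoc, Tmat_mul_walshHadamard, ← Matrix.mul_assoc, walshHadamard_mul_self,
    Matrix.one_mul]

theorem exp_mul_two_cosh_pow_le_trace_exp (N : ℕ) (β Γ : ℝ) (U : (Fin N → Bool) → ℝ) :
    Real.exp (-(β * (2⁻¹ ^ N * ∑ σ, U σ))) * (2 * Real.cosh (β * Γ)) ^ N ≤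
      (NormedSpace.exp (-(β • (Γ • Tmat N + diagonal U)))).trace := by
  have hA : (-(β • (Γ • Tmat N + diagonal U))).IsHermitian :=
    ((((Tmat_isHermitian N).smul (.all Γ)).add (isHermitian_diagonal U)).smul (.all β)).neg
  have hdiag (τ : Fin N → Bool) : (walshHadamard (Fin N) * -(β • (Γ • Tmat N + diagonal U)) *
      star (walshHadamard (Fin N))) τ τ =
      -(β * Γ) * magnetization τ + -(β * (2⁻¹ ^ N * ∑ σ, U σ)) := by
    simp only [star_walshHadamard, Matrix.mul_neg, Matrix.neg_mul, Matrix.mul_smul,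
      Matrix.smul_mul, Matrix.mul_add, Matrix.add_mul, walshHadamard_mul_Tmat_mul_walshHadamard]
    rw [Matrix.neg_apply, Matrix.smul_apply, Matrix.add_apply, Matrix.smul_apply, diagonal_apply_eq,
      walshHadamard_mul_diagonal_mul_walshHadamard_apply_self, Fintype.card_fin, smul_eq_mul,
      smul_eq_mul]
    ring
  calc _ = ∑ τ, Real.exp ((walshHadamard (Fin N) * -(β • (Γ • Tmat N + diagonal U)) *
          star (walshHadamard (Fin N))) τ τ) := by
        simp_rw [hdiag, Real.exp_add, ← Finset.sum_mul, sum_exp_mul_magnetization, Real.cosh_neg,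
          Fintype.card_fin, mul_comm]
    _ ≤ _ := hA.sum_exp_conj_apply_self_le_trace_exp ⟨_, walshHadamard_mem_unitaryGroup _⟩

theorem pressure_ge_paramagnetic_general (N : ℕ) (hN : 0 < N) (β Γ : ℝ)
    (U : (Fin N → Bool) → ℝ) :
    Real.log (Real.cosh (β * Γ)) - β / (N * 2 ^ N) * ∑ σ, U σ ≤
      Real.log ((2 : ℝ)⁻¹ ^ N *
        (NormedSpace.exp (-(β • (Γ • Tmat N + Matrix.diagonal U)))).trace) / N := by
  set c := β * (2⁻¹ ^ N * ∑ σ, U σ)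
  have hN_pos : (0 : ℝ) < N := Nat.cast_pos.mpr hN
  have hscaled : Real.exp (-c) * Real.cosh (β * Γ) ^ N ≤ (2 : ℝ)⁻¹ ^ N *
      (NormedSpace.exp (-(β • (Γ • Tmat N + Matrix.diagonal U)))).trace := by
    calc Real.exp (-c) * Real.cosh (β * Γ) ^ N
        = (2 : ℝ)⁻¹ ^ N * (Real.exp (-c) * (2 * Real.cosh (β * Γ)) ^ N) := by
          rw [mul_pow, inv_pow]
          field_simp
      _ ≤ _ := by gcongr; exact exp_mul_two_cosh_pow_le_trace_exp N β Γ U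
  have hlog := Real.log_le_log (by positivity) hscaled
  rw [Real.log_mul (by positivity) (by positivity), Real.log_exp, Real.log_pow] at hlog
  rw [le_div_iff₀ hN_pos]
  calc _ = -c + N * Real.log (Real.cosh (β * Γ)) := by
        simp only [c, inv_pow]
        field_simp
        ring
    _ ≤ _ := hlog

/-- Paramagnetic lower bound on the pressure:
`p_N(β,Γ) ≥ ln cosh(βΓ) - (β/(N 2^N)) ∑_σ U(σ)`. -/
theorem pressure_ge_paramagnetic (N : ℕ) (hN : 0 < N) (β Γ : ℝ) (hβ : 0 ≤ β) (hΓ : 0 ≤ Γ)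
    (U : (Fin N → Bool) → ℝ) :
    Real.log (Real.cosh (β * Γ)) - β / (N * 2 ^ N) * ∑ σ, U σ ≤
      Real.log ((2 : ℝ)⁻¹ ^ N *
        (NormedSpace.exp (-(β • (Γ • Tmat N + Matrix.diagonal U)))).trace) / N :=
  pressure_ge_paramagnetic_general N hN β Γ U
end

section
/- Let L = ⋃_α C^{(α)} be a decomposition of a subset L ⊆ Q_N into subsets with pairwise distance d(C^{(α)}, C^{(α')}) > 2 for α ≠ α'. Let A_L be the 0-1 matrix with entries A_L(σ,σ') = 1 iff d(σ,σ') = 1 and (σ ∈ L or σ' ∈ L). Then ‖A_L‖ = max_α ‖A_{C^{(α)}}‖, and consequently ‖A_L‖ ≤ √(2N max_α |C^{(α)}|). -/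
/-- The ℓ²-operator norm of a real square matrix. -/
noncomputable def matOpNorm {n : Type*} [Fintype n] [DecidableEq n] (A : Matrix n n ℝ) : ℝ :=
  ‖Matrix.toEuclideanCLM (𝕜 := ℝ) A‖

/-- The 0-1 matrix of edges of the Hamming cube reaching the set `C`. -/
def edgeBoundaryMatrix (N : ℕ) (C : Finset (Fin N → Bool)) :
    Matrix (Fin N → Bool) (Fin N → Bool) ℝ :=
  fun σ σ' => if hammingDist σ σ' = 1 ∧ (σ ∈ C ∨ σ' ∈ C) then 1 else 0

/-! Every nonzero entry of `A_C` lies in `T × T` for the 1-neighbourhood `T` of `C`, and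
distance `> 2` makes the neighbourhoods of the components disjoint. Hence `A_L = ∑ α, A_{C α}` is
block diagonal: `A_L x` splits orthogonally into the pieces `A_{C α} (x|_{T α})`, so the norm of
the sum is the largest block norm. Each block is bounded by its Frobenius norm, and `A_C` has at
most `2 N |C|` nonzero entries: each is an ordered pair of neighbours with an endpoint in `C`. -/

open Finset Matrix Function

lemma EuclideanSpace.norm_toLp_sq {n : Type*} [Fintype n] (x : n → ℝ) :
    ‖WithLp.toLp 2 x‖ ^ 2 = ∑ i, x i ^ 2 :=
  EuclideanSpace.real_norm_sq_eq _

section OpNorm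

variable {n : Type*} [Fintype n] [DecidableEq n]

lemma sum_sq_mulVec_le (A : Matrix n n ℝ) (x : n → ℝ) :
    ∑ i, (A *ᵥ x) i ^ 2 ≤ matOpNorm A ^ 2 * ∑ i, x i ^ 2 := by
  rw [← EuclideanSpace.norm_toLp_sq, ← EuclideanSpace.norm_toLp_sq, ← mul_pow,
    ← toEuclideanCLM_toLp]
  gcongr
  exact (toEuclideanCLM (𝕜 := ℝ) A).le_opNorm _

lemma matOpNorm_le_of_sum_sq_mulVec_le (A : Matrix n n ℝ) {c : ℝ} (hc : 0 ≤ c)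
    (h : ∀ x : n → ℝ, ∑ i, (A *ᵥ x) i ^ 2 ≤ c ^ 2 * ∑ i, x i ^ 2) :
    matOpNorm A ≤ c := by
  refine ContinuousLinearMap.opNorm_le_bound _ hc fun x => ?_
  rw [← WithLp.toLp_ofLp 2 x, toEuclideanCLM_toLp]
  refine pow_le_pow_iff_left₀ (norm_nonneg _) (by positivity) two_ne_zero |>.mp ?_
  rw [mul_pow, EuclideanSpace.norm_toLp_sq, EuclideanSpace.norm_toLp_sq]
  exact h _

lemma matOpNorm_le_sqrt_sum_sq (A : Matrix n n ℝ) :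
    matOpNorm A ≤ √(∑ i, ∑ j, A i j ^ 2) := by
  refine matOpNorm_le_of_sum_sq_mulVec_le A (Real.sqrt_nonneg _) fun x => ?_
  rw [Real.sq_sqrt (by positivity), sum_mul]
  exact sum_le_sum fun i _ => sum_mul_sq_le_sq_mul_sq univ (A i) x

end OpNorm

lemma sq_sum_eq_sum_sq_of_support_subsingleton {ι : Type*} [Fintype ι] {f : ι → ℝ}
    (hf : (support f).Subsingleton) : (∑ α, f α) ^ 2 = ∑ α, f α ^ 2 := by
  rcases hf.eq_empty_or_singleton with h | ⟨a, h⟩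
  · simp [support_eq_empty_iff.mp h]
  · have hzero : ∀ b ≠ a, f b = 0 := fun b hb => notMem_support.mp (h ▸ hb)
    rw [sum_eq_single a (fun b _ hb => hzero b hb) (by simp),
      sum_eq_single a (fun b _ hb => by simp [hzero b hb]) (by simp)]

lemma Set.indicator_sq_le {n : Type*} (s : Set n) (x : n → ℝ) (i : n) :
    s.indicator x i ^ 2 ≤ x i ^ 2 :=
  sq_le_sq.mpr (by simpa only [Real.norm_eq_abs] using norm_indicator_le_norm_self x i)

section MulVecIndicator

variable {n R : Type*} [Fintype n] [NonUnitalNonAssocSemiring R] {A : Matrix n n R} {T : Set n}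

lemma mulVec_indicator_of_support (hA : ∀ i j, A i j ≠ 0 → j ∈ T) (x : n → R) :
    A *ᵥ T.indicator x = A *ᵥ x := by
  ext i
  refine sum_congr rfl fun j _ => ?_
  by_cases hj : j ∈ T
  · simp [hj]
  · simp [not_imp_comm.mp (hA i j) hj]

lemma mulVec_indicator_eq_zero (hA : ∀ i j, A i j ≠ 0 → j ∈ T) {U : Set n} (hTU : Disjoint T U)
    (x : n → R) : A *ᵥ U.indicator x = 0 := by
  rw [← mulVec_indicator_of_support hA, Set.indicator_indicator, hTU.inter_eq,
    Set.indicator_empty]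
  exact mulVec_zero A

end MulVecIndicator

section BlockDiagonal

variable {n ι : Type*} [Fintype n] [DecidableEq n] [Fintype ι]
  {S : ι → Set n} {B : ι → Matrix n n ℝ}

lemma matOpNorm_le_matOpNorm_sum (hS : Pairwise (Disjoint on S))
    (hB : ∀ α i j, B α i j ≠ 0 → i ∈ S α ∧ j ∈ S α) (α : ι) :
    matOpNorm (B α) ≤ matOpNorm (∑ β, B β) := by
  refine matOpNorm_le_of_sum_sq_mulVec_le _ (norm_nonneg _) fun x => ?_
  have hx : (∑ β, B β) *ᵥ (S α).indicator x = B α *ᵥ x := by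
    rw [sum_mulVec, sum_eq_single α
      (fun β _ hβ => mulVec_indicator_eq_zero (fun i j h => (hB β i j h).2) (hS hβ) x) (by simp),
      mulVec_indicator_of_support (fun i j h => (hB α i j h).2)]
  calc ∑ i, (B α *ᵥ x) i ^ 2 = ∑ i, ((∑ β, B β) *ᵥ (S α).indicator x) i ^ 2 := by rw [hx]
    _ ≤ matOpNorm (∑ β, B β) ^ 2 * ∑ i, (S α).indicator x i ^ 2 := sum_sq_mulVec_le _ _
    _ ≤ matOpNorm (∑ β, B β) ^ 2 * ∑ i, x i ^ 2 :=
      mul_le_mul_of_nonneg_left (sum_le_sum fun i _ => (S α).indicator_sq_le x i) (sq_nonneg _)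

lemma matOpNorm_sum_le (hS : Pairwise (Disjoint on S))
    (hB : ∀ α i j, B α i j ≠ 0 → i ∈ S α ∧ j ∈ S α) {c : ℝ} (hc : 0 ≤ c)
    (h : ∀ α, matOpNorm (B α) ≤ c) : matOpNorm (∑ α, B α) ≤ c := by
  refine matOpNorm_le_of_sum_sq_mulVec_le _ hc fun x => ?_
  have hmem : ∀ i, {α | i ∈ S α}.Subsingleton := fun i α hα β hβ =>
    hS.eq (Set.not_disjoint_iff.mpr ⟨i, hα, hβ⟩)
  have hrow : ∀ α i, (B α *ᵥ x) i ≠ 0 → i ∈ S α := fun α i hi => by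
    obtain ⟨j, -, hj⟩ := exists_ne_zero_of_sum_ne_zero hi
    exact (hB α i j (left_ne_zero_of_mul hj)).1
  calc ∑ i, ((∑ α, B α) *ᵥ x) i ^ 2 = ∑ i, (∑ α, (B α *ᵥ x) i) ^ 2 := by
        simp only [sum_mulVec, Finset.sum_apply]
    _ = ∑ α, ∑ i, (B α *ᵥ (S α).indicator x) i ^ 2 := by
        rw [sum_comm]
        refine sum_congr rfl fun i _ => ?_
        rw [sq_sum_eq_sum_sq_of_support_subsingleton ((hmem i).anti fun α => hrow α i)]
        exact sum_congr rfl fun α _ => by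
          rw [mulVec_indicator_of_support fun j k h => (hB α j k h).2]
    _ ≤ ∑ α, c ^ 2 * ∑ i, (S α).indicator x i ^ 2 := by
        gcongr with α
        exact (sum_sq_mulVec_le _ _).trans (by gcongr; exacts [norm_nonneg _, h α])
    _ = c ^ 2 * ∑ i, (∑ α, (S α).indicator x i) ^ 2 := by
        rw [← mul_sum, sum_comm]
        exact congrArg _ <| sum_congr rfl fun i _ => (sq_sum_eq_sum_sq_of_support_subsingleton
          ((hmem i).anti fun α => Set.mem_of_indicator_ne_zero (s := S α))).symm
    _ ≤ c ^ 2 * ∑ i, x i ^ 2 := by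
        refine mul_le_mul_of_nonneg_left (sum_le_sum fun i _ => ?_) (sq_nonneg _)
        rw [← Finset.indicator_biUnion_apply _ _ (hS.set_pairwise _)]
        exact Set.indicator_sq_le _ x i

lemma matOpNorm_sum_eq_sup' [Nonempty ι] (hS : Pairwise (Disjoint on S))
    (hB : ∀ α i j, B α i j ≠ 0 → i ∈ S α ∧ j ∈ S α) :
    matOpNorm (∑ α, B α) = univ.sup' univ_nonempty fun α => matOpNorm (B α) := by
  have hle : ∀ α, matOpNorm (B α) ≤ univ.sup' univ_nonempty fun α => matOpNorm (B α) :=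
    fun α => le_sup' (fun α => matOpNorm (B α)) (mem_univ α)
  exact le_antisymm
    (matOpNorm_sum_le hS hB ((norm_nonneg _).trans (hle (Classical.arbitrary ι))) hle)
    (sup'_le _ _ fun α _ => matOpNorm_le_matOpNorm_sum hS hB α)

end BlockDiagonal

lemma exists_eq_update_not_of_hammingDist_eq_one {ι : Type*} [Fintype ι] [DecidableEq ι]
    {σ σ' : ι → Bool} (h : hammingDist σ σ' = 1) : ∃ i, σ' = update σ i (!σ i) := by
  obtain ⟨i, hi⟩ := card_eq_one.mp h
  have hdiff : ∀ j, σ j ≠ σ' j ↔ j = i := fun j => by simpa using Finset.ext_iff.mp hi j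
  refine ⟨i, funext fun j => ?_⟩
  rcases eq_or_ne j i with rfl | hji
  · rw [update_self, Bool.eq_not_iff]
    exact ((hdiff j).2 rfl).symm
  · rw [update_of_ne hji]
    by_contra hne
    exact hji ((hdiff j).1 (Ne.symm hne))

lemma card_hammingDist_eq_one_le {ι : Type*} [Fintype ι] [DecidableEq ι] (σ : ι → Bool) :
    #{σ' | hammingDist σ σ' = 1} ≤ Fintype.card ι :=
  calc #{σ' | hammingDist σ σ' = 1} ≤ #(univ.image fun i => update σ i (!σ i)) :=
        card_le_card fun σ' hσ' => by
          obtain ⟨i, rfl⟩ := exists_eq_update_not_of_hammingDist_eq_one (mem_filter.mp hσ').2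
          exact mem_image_of_mem _ (mem_univ i)
    _ ≤ Fintype.card ι := card_image_le

section EdgeBoundary

variable {N : ℕ}

def hammingThickening (C : Finset (Fin N → Bool)) : Set (Fin N → Bool) :=
  {σ | ∃ τ ∈ C, hammingDist σ τ ≤ 1}

lemma mem_hammingThickening_of_edgeBoundaryMatrix_ne_zero {C : Finset (Fin N → Bool)}
    {σ σ' : Fin N → Bool} (h : edgeBoundaryMatrix N C σ σ' ≠ 0) :
    σ ∈ hammingThickening C ∧ σ' ∈ hammingThickening C := by
  obtain ⟨hd, hσ | hσ'⟩ : hammingDist σ σ' = 1 ∧ (σ ∈ C ∨ σ' ∈ C) := by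
    by_contra hc
    exact h (if_neg hc)
  · exact ⟨⟨σ, hσ, by simp⟩, ⟨σ, hσ, (hammingDist_comm σ' σ).trans hd |>.le⟩⟩
  · exact ⟨⟨σ', hσ', hd.le⟩, ⟨σ', hσ', by simp⟩⟩

lemma pairwise_disjoint_hammingThickening {ι : Type*} {C : ι → Finset (Fin N → Bool)}
    (hdist : ∀ α α', α ≠ α' → ∀ σ ∈ C α, ∀ σ' ∈ C α', 2 < hammingDist σ σ') :
    Pairwise (Disjoint on fun α => hammingThickening (C α)) := by
  intro α β hne
  rw [onFun, Set.disjoint_left]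
  rintro σ ⟨τ, hτ, hστ⟩ ⟨τ', hτ', hστ'⟩
  have := hammingDist_triangle_left τ τ' σ
  have := hdist α β hne τ hτ τ' hτ'
  omega

lemma edgeBoundaryMatrix_eq_sum {ι : Type*} [Fintype ι] {L : Finset (Fin N → Bool)}
    {C : ι → Finset (Fin N → Bool)} (hL : ∀ σ, σ ∈ L ↔ ∃ α, σ ∈ C α)
    (hdisj : Pairwise (Disjoint on fun α => hammingThickening (C α))) :
    edgeBoundaryMatrix N L = ∑ α, edgeBoundaryMatrix N (C α) := by
  ext σ σ'
  rw [Matrix.sum_apply]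
  by_cases h : hammingDist σ σ' = 1 ∧ (σ ∈ L ∨ σ' ∈ L)
  · obtain ⟨α, hα⟩ : ∃ α, hammingDist σ σ' = 1 ∧ (σ ∈ C α ∨ σ' ∈ C α) := by
      rcases h with ⟨hd, hσ | hσ'⟩
      · obtain ⟨α, hα⟩ := (hL σ).1 hσ
        exact ⟨α, hd, Or.inl hα⟩
      · obtain ⟨α, hα⟩ := (hL σ').1 hσ'
        exact ⟨α, hd, Or.inr hα⟩
    have hαne : edgeBoundaryMatrix N (C α) σ σ' ≠ 0 := by simp [edgeBoundaryMatrix, hα]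
    rw [sum_eq_single α _ (by simp)]
    · simp [edgeBoundaryMatrix, h, hα]
    · intro β _ hβ
      by_contra hβne
      exact Set.disjoint_left.mp (hdisj hβ)
        (mem_hammingThickening_of_edgeBoundaryMatrix_ne_zero hβne).1
        (mem_hammingThickening_of_edgeBoundaryMatrix_ne_zero hαne).1
  · refine (if_neg h).trans (sum_eq_zero fun α _ => if_neg fun hα => h ⟨hα.1, ?_⟩).symm
    exact hα.2.imp (fun hσ => (hL σ).2 ⟨α, hσ⟩) (fun hσ' => (hL σ').2 ⟨α, hσ'⟩)

lemma sum_sq_edgeBoundaryMatrix_le (C : Finset (Fin N → Bool)) :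
    ∑ σ, ∑ σ', edgeBoundaryMatrix N C σ σ' ^ 2 ≤ 2 * N * #C := by
  set f : (Fin N → Bool) → (Fin N → Bool) → ℝ :=
    fun σ σ' => if σ ∈ C ∧ hammingDist σ σ' = 1 then 1 else 0 with hf
  have hentry : ∀ σ σ', edgeBoundaryMatrix N C σ σ' ^ 2 ≤ f σ σ' + f σ' σ := by
    intro σ σ'
    simp only [edgeBoundaryMatrix, hf, hammingDist_comm σ' σ]
    split_ifs <;> norm_num
    tauto
  have hrow : ∀ σ, ∑ σ', f σ σ' ≤ if σ ∈ C then (N : ℝ) else 0 := by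
    intro σ
    split_ifs with hσ
    · simp only [hf, hσ, true_and, sum_boole]
      exact_mod_cast (card_hammingDist_eq_one_le σ).trans_eq (Fintype.card_fin N)
    · simp [hf, hσ]
  calc ∑ σ, ∑ σ', edgeBoundaryMatrix N C σ σ' ^ 2 ≤ ∑ σ, ∑ σ', (f σ σ' + f σ' σ) :=
        sum_le_sum fun σ _ => sum_le_sum fun σ' _ => hentry σ σ'
    _ = 2 * ∑ σ, ∑ σ', f σ σ' := by
        simp only [sum_add_distrib, two_mul]
        exact congrArg _ sum_comm
    _ ≤ 2 * ∑ σ, if σ ∈ C then (N : ℝ) else 0 := by gcongr with σ; exact hrow σ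
    _ = 2 * N * #C := by rw [sum_ite_mem, univ_inter, sum_const, nsmul_eq_mul]; ring

lemma matOpNorm_edgeBoundaryMatrix_le (C : Finset (Fin N → Bool)) :
    matOpNorm (edgeBoundaryMatrix N C) ≤ √(2 * N * #C) :=
  (matOpNorm_le_sqrt_sum_sq _).trans (Real.sqrt_le_sqrt (sum_sq_edgeBoundaryMatrix_le C))

end EdgeBoundary

/-- If `L = ⋃_α C^{(α)}` is decomposed into components with pairwise distance `> 2`, then
`‖A_L‖ = max_α ‖A_{C^{(α)}}‖ ≤ √(2N max_α |C^{(α)}|)`. -/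
theorem opNorm_edgeBoundary_decomposition {ι : Type*} [Fintype ι] [Nonempty ι]
    (N : ℕ) (L : Finset (Fin N → Bool)) (C : ι → Finset (Fin N → Bool))
    (hL : ∀ σ, σ ∈ L ↔ ∃ α, σ ∈ C α)
    (hdist : ∀ α α', α ≠ α' → ∀ σ ∈ C α, ∀ σ' ∈ C α', 2 < hammingDist σ σ') :
    matOpNorm (edgeBoundaryMatrix N L) =
      Finset.univ.sup' Finset.univ_nonempty (fun α => matOpNorm (edgeBoundaryMatrix N (C α))) ∧
    matOpNorm (edgeBoundaryMatrix N L) ≤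
      Real.sqrt (2 * N * (Finset.univ.sup fun α => (C α).card)) := by
  have hdisj := pairwise_disjoint_hammingThickening hdist
  have hnorm : matOpNorm (edgeBoundaryMatrix N L) =
      univ.sup' univ_nonempty fun α => matOpNorm (edgeBoundaryMatrix N (C α)) := by
    rw [edgeBoundaryMatrix_eq_sum hL hdisj]
    exact matOpNorm_sum_eq_sup' hdisj fun _ _ _ =>
      mem_hammingThickening_of_edgeBoundaryMatrix_ne_zero
  refine ⟨hnorm, hnorm ▸ sup'_le _ _ fun α _ => (matOpNorm_edgeBoundaryMatrix_le _).trans ?_⟩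
  gcongr
  exact_mod_cast le_sup (f := fun α => #(C α)) (mem_univ α)
end
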